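/- (Reverting inclusion) If H is revertible to G, then o(H+X) ⊆ o(G+X) for all three-player impartial games X. -/
import Mathlib


inductive IGame : Type where
  | mk : List IGame → IGame

namespace IGame

def opts : IGame → List IGame
  | mk l => l

theorem sizeOf_lt_of_mem {g G : IGame} (h : g ∈ G.opts) : sizeOf g < sizeOf G := by
  cases G with
  | mk l =>
    have h2 : g ∈ l := h
    have := List.sizeOf_lt_of_mem h2
    simp only [mk.sizeOf_spec]
    omega

def add : IGame → IGame → IGame
  | G, H =>
    mk ((G.opts.attach.map fun g => add g.1 H) ++ (H.opts.attach.map fun h => add G h.1))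
termination_by G H => sizeOf G + sizeOf H
decreasing_by
  · have := sizeOf_lt_of_mem g.2; omega
  · have := sizeOf_lt_of_mem h.2; omega

inductive Player : Type where
  | N | O | P
  deriving DecidableEq

def out : IGame → Player → Prop
  | G, .N => ∃ g : {x // x ∈ G.opts}, out g.1 .P
  | G, .O => ∀ g : {x // x ∈ G.opts}, out g.1 .N
  | G, .P => ∀ g : {x // x ∈ G.opts}, out g.1 .O
termination_by G _ => sizeOf G
decreasing_by
  all_goals exact sizeOf_lt_of_mem g.2

theorem out_N {G : IGame} : out G .N ↔ ∃ g ∈ G.opts, out g .P := by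
  rw [out]
  exact ⟨fun ⟨g, h⟩ => ⟨g.1, g.2, h⟩, fun ⟨g, hm, h⟩ => ⟨⟨g, hm⟩, h⟩⟩

theorem out_O {G : IGame} : out G .O ↔ ∀ g ∈ G.opts, out g .N := by
  rw [out]
  exact ⟨fun h g hm => h ⟨g, hm⟩, fun h g => h g.1 g.2⟩

theorem out_P {G : IGame} : out G .P ↔ ∀ g ∈ G.opts, out g .O := by
  rw [out]
  exact ⟨fun h g hm => h ⟨g, hm⟩, fun h g => h g.1 g.2⟩

def outcome (G : IGame) : Set Player := {p | out G p}

def nim : Nat → IGame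
  | 0 => mk []
  | n+1 => mk ((nim n).opts ++ [nim n])

end IGame

namespace IGame

/-- Equality of games: identical outcomes in all disjunctive sums. -/
def eqv (G H : IGame) : Prop :=
  ∀ X : IGame, outcome (add G X) = outcome (add H X)

/-- `H` is revertible to `G`. -/
def Revertible (H G : IGame) : Prop :=
  (∀ G' ∈ G.opts, ∃ H' ∈ H.opts, eqv H' G') ∧
  (∀ H' ∈ H.opts, (∀ G' ∈ G.opts, ¬ eqv H' G') →
    ∃ H'' ∈ H'.opts, ∃ H''' ∈ H''.opts, eqv H''' G)

theorem mem_opts_add {G X k : IGame} :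
    k ∈ (add G X).opts ↔ (∃ g ∈ G.opts, k = add g X) ∨ (∃ x ∈ X.opts, k = add G x) := by
  rw [add]
  simp only [opts, List.mem_append, List.mem_map, List.mem_attach, true_and,
    Subtype.exists, exists_prop]
  constructor
  · rintro (⟨g, hg, rfl⟩ | ⟨x, hx, rfl⟩)
    · exact Or.inl ⟨g, hg, rfl⟩
    · exact Or.inr ⟨x, hx, rfl⟩
  · rintro (⟨g, hg, rfl⟩ | ⟨x, hx, rfl⟩)
    · exact Or.inl ⟨g, hg, rfl⟩
    · exact Or.inr ⟨x, hx, rfl⟩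

theorem out_eqv {G H : IGame} (he : eqv G H) (X : IGame) (p : Player) :
    out (add G X) p ↔ out (add H X) p :=
  Set.ext_iff.mp (he X) p

theorem reverting_key (G H : IGame) (h : Revertible H G) (X : IGame) :
    ∀ p : Player, out (add H X) p → out (add G X) p := by
  intro p hp
  cases p with
  | N =>
    rw [out_N] at hp ⊢
    obtain ⟨k, hk, hkP⟩ := hp
    rw [mem_opts_add] at hk
    rcases hk with ⟨H', hH', rfl⟩ | ⟨X', hX', rfl⟩
    · by_cases hc : ∃ G' ∈ G.opts, eqv H' G'
      · obtain ⟨G', hG', he⟩ := hc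
        exact ⟨add G' X, mem_opts_add.mpr (Or.inl ⟨G', hG', rfl⟩),
          (out_eqv he X .P).mp hkP⟩
      · push_neg at hc
        obtain ⟨H'', hH'', H''', hH''', he⟩ := h.2 H' hH' hc
        rw [out_P] at hkP
        have h1 : out (add H'' X) .O :=
          hkP _ (mem_opts_add.mpr (Or.inl ⟨H'', hH'', rfl⟩))
        rw [out_O] at h1
        have h2 : out (add H''' X) .N :=
          h1 _ (mem_opts_add.mpr (Or.inl ⟨H''', hH''', rfl⟩))
        have h3 : out (add G X) .N := (out_eqv he X .N).mp h2
        rw [out_N] at h3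
        exact h3
    · exact ⟨add G X', mem_opts_add.mpr (Or.inr ⟨X', hX', rfl⟩),
        reverting_key G H h X' .P hkP⟩
  | O =>
    rw [out_O] at hp ⊢
    intro k hk
    rw [mem_opts_add] at hk
    rcases hk with ⟨G', hG', rfl⟩ | ⟨X', hX', rfl⟩
    · obtain ⟨H', hH', he⟩ := h.1 G' hG'
      exact (out_eqv he X .N).mp
        (hp _ (mem_opts_add.mpr (Or.inl ⟨H', hH', rfl⟩)))
    · exact reverting_key G H h X' .N
        (hp _ (mem_opts_add.mpr (Or.inr ⟨X', hX', rfl⟩)))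
  | P =>
    rw [out_P] at hp ⊢
    intro k hk
    rw [mem_opts_add] at hk
    rcases hk with ⟨G', hG', rfl⟩ | ⟨X', hX', rfl⟩
    · obtain ⟨H', hH', he⟩ := h.1 G' hG'
      exact (out_eqv he X .O).mp
        (hp _ (mem_opts_add.mpr (Or.inl ⟨H', hH', rfl⟩)))
    · exact reverting_key G H h X' .O
        (hp _ (mem_opts_add.mpr (Or.inr ⟨X', hX', rfl⟩)))
termination_by sizeOf X
decreasing_by all_goals exact sizeOf_lt_of_mem hX'

/-- If `H` is revertible to `G`, then `o(H+X) ⊆ o(G+X)` for all `X`. -/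
theorem reverting (G H : IGame) (h : Revertible H G) :
    ∀ X : IGame, outcome (add H X) ⊆ outcome (add G X) := by
  intro X p hp
  exact reverting_key G H h X p hp

end IGame
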